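/- arXiv:2505.14041 — 2 statements merged into one kernel-verified Lean document; each statement's English description precedes it below -/
import Mathlib

section
/- Let k, m ∈ ℕ. There exists C > 0 such that for every polynomial P ∈ ℝ[x_1,…,x_d] of degree at most m, every x ∈ ℝ^d, and every 0 < r ≤ 1, one has |P(x)| ≤ (C/r^{k+d}) · sup { |∫_{ℝ^d} P(y) φ(y) dy| : φ ∈ C^∞(ℝ^d), supp φ ⊆ closed ball B̄(x,r), and max_{|α|≤k} sup_{y∈ℝ^d} |φ^{(α)}(y)| ≤ 1 }. -/
/-!
Substituting `y = x + r z` turns a test function for `B̄(0,1)` into one for `B̄(x,r)` at the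
cost of a factor `r^(k+d)` (`r^k` from the derivative bounds, `r^d` from the Jacobian), and
does not raise the degree of `P`; so it suffices to bound `|Q(0)|` for `x = 0`, `r = 1`. On the
finite-dimensional space of polynomials of degree at most `m`, evaluation at `0` vanishes on the
common kernel of the functionals `Q ↦ ∫ Q φ` (if `Q(0) ≠ 0`, a bump on which `Q` keeps its sign
detects it), so it is a finite linear combination of these functionals, and the sum of the
absolute values of the coefficients is a suitable constant.
-/

open MeasureTheory

noncomputable section

/-- First-order partial derivative in the `i`-th coordinate direction. -/
noncomputable def pderivI {d : ℕ} (i : Fin d) (f : EuclideanSpace ℝ (Fin d) → ℝ) :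
    EuclideanSpace ℝ (Fin d) → ℝ :=
  fun x => fderiv ℝ f x (EuclideanSpace.single i 1)

noncomputable def pderivList {d : ℕ} : List (Fin d) → (EuclideanSpace ℝ (Fin d) → ℝ) →
    EuclideanSpace ℝ (Fin d) → ℝ
  | [], f => f
  | i :: l, f => pderivList l (pderivI i f)

/-- The multi-index partial derivative `f^{(α)}`. -/
noncomputable def pderivMulti {d : ℕ} (α : Fin d → ℕ) (f : EuclideanSpace ℝ (Fin d) → ℝ) :
    EuclideanSpace ℝ (Fin d) → ℝ :=
  pderivList ((List.finRange d).flatMap fun i => List.replicate (α i) i) f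

/-- `d_K(x) = min(1, d(x, ∂K))`. -/
noncomputable def dK {d : ℕ} (K : Set (EuclideanSpace ℝ (Fin d)))
    (x : EuclideanSpace ℝ (Fin d)) : ℝ :=
  min 1 (Metric.infDist x (frontier K))

/-- `f` is a Schwartz function: smooth, and all derivatives decay faster than any
polynomial. -/
def IsSchwartz {d : ℕ} (f : EuclideanSpace ℝ (Fin d) → ℝ) : Prop :=
  ContDiff ℝ (⊤ : ℕ∞) f ∧ ∀ (α : Fin d → ℕ) (n : ℕ), ∃ C : ℝ, ∀ x,
    |pderivMulti α f x| * (1 + ‖x‖) ^ n ≤ C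

/-- The space of polynomials `P` such that `sup_{x ∈ K} |P(x)| w(x) / (1+|x|)^n < ∞`,
as a submodule of the polynomial ring. -/
noncomputable def polyGrowthSpace (d : ℕ) (K : Set (EuclideanSpace ℝ (Fin d)))
    (w : EuclideanSpace ℝ (Fin d) → ℝ) (n : ℕ) : Submodule ℝ (MvPolynomial (Fin d) ℝ) where
  carrier := {P | ∃ C : ℝ, ∀ x ∈ K,
    |MvPolynomial.eval (fun i => x i) P * w x| ≤ C * (1 + ‖x‖) ^ n}
  zero_mem' := ⟨0, fun x _ => by simp⟩
  add_mem' := by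
    rintro P Q ⟨C, hC⟩ ⟨D, hD⟩
    refine ⟨C + D, fun x hx => ?_⟩
    have h3 : MvPolynomial.eval (fun i => x i) (P + Q) * w x
        = MvPolynomial.eval (fun i => x i) P * w x
          + MvPolynomial.eval (fun i => x i) Q * w x := by
      rw [map_add, add_mul]
    rw [h3, add_mul]
    exact (abs_add_le _ _).trans (add_le_add (hC x hx) (hD x hx))
  smul_mem' := by
    rintro c P ⟨C, hC⟩
    refine ⟨|c| * C, fun x hx => ?_⟩
    have h3 : MvPolynomial.eval (fun i => x i) (c • P) * w x
        = c * (MvPolynomial.eval (fun i => x i) P * w x) := by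
      rw [MvPolynomial.smul_eq_C_mul, map_mul, MvPolynomial.eval_C, mul_assoc]
    rw [h3, abs_mul, mul_assoc]
    exact mul_le_mul_of_nonneg_left (hC x hx) (abs_nonneg c)

/-- Integral of `f` against the signed measure `μ`. -/
noncomputable def sintegral {d : ℕ} (μ : MeasureTheory.SignedMeasure (EuclideanSpace ℝ (Fin d)))
    (f : EuclideanSpace ℝ (Fin d) → ℝ) : ℝ :=
  (∫ x, f x ∂μ.toJordanDecomposition.posPart) - (∫ x, f x ∂μ.toJordanDecomposition.negPart)

/-- A weight sequence: positive, normalized, log-convex, non-quasianalytic. -/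
def IsWeightSeq (M : ℕ → ℝ) : Prop :=
  (∀ p, 0 < M p) ∧ M 0 = 1 ∧ 1 ≤ M 1 ∧
    (∀ p : ℕ, M (p + 1) ^ 2 ≤ M p * M (p + 2)) ∧
    Summable (fun p : ℕ => M p / M (p + 1))

/-- Condition (M.2), moderate growth. -/
def CondM2 (M : ℕ → ℝ) : Prop :=
  ∃ C : ℝ, 0 < C ∧ ∀ p q : ℕ, M (p + q) ≤ C ^ (p + q) * M p * M q

/-- Condition (M.3), strong non-quasianalyticity. -/
def CondM3 (M : ℕ → ℝ) : Prop :=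
  ∃ C : ℝ, 0 < C ∧ ∀ p : ℕ, 1 ≤ p →
    (∑' q : ℕ, M (p + q) / M (p + q + 1)) ≤ C * p * (M p / M (p + 1))

/-- The function `ν_M(t) = inf_{p} t^p M_p / p!`. -/
noncomputable def nuM (M : ℕ → ℝ) (t : ℝ) : ℝ :=
  ⨅ p : ℕ, t ^ p * M p / (Nat.factorial p : ℝ)

/-- Membership in the Gelfand-Shilov space `S^{M,h}(ℝ^d)`. -/
def MemGS (d : ℕ) (M : ℕ → ℝ) (h : ℝ) (f : EuclideanSpace ℝ (Fin d) → ℝ) : Prop :=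
  ContDiff ℝ (⊤ : ℕ∞) f ∧ ∀ n : ℕ, ∃ C : ℝ,
    ∀ (α : Fin d → ℕ) (x : EuclideanSpace ℝ (Fin d)),
      |pderivMulti α f x| * (1 + ‖x‖) ^ n ≤ C * h ^ (∑ i, α i) * M (∑ i, α i)

/-- Membership in the Gelfand-Shilov space `S^σ(ℝ^d)`. -/
def MemGSsigma (d : ℕ) (σ : ℝ) (f : EuclideanSpace ℝ (Fin d) → ℝ) : Prop :=
  ContDiff ℝ (⊤ : ℕ∞) f ∧ ∃ h : ℝ, 0 < h ∧ ∀ n : ℕ, ∃ C : ℝ,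
    ∀ (α : Fin d → ℕ) (x : EuclideanSpace ℝ (Fin d)),
      |pderivMulti α f x| * (1 + ‖x‖) ^ n
        ≤ C * h ^ (∑ i, α i) * (Nat.factorial (∑ i, α i) : ℝ) ^ σ

/-- The norm `‖f‖^{M,h}_n`. -/
noncomputable def gsNorm (d : ℕ) (M : ℕ → ℝ) (h : ℝ) (n : ℕ)
    (f : EuclideanSpace ℝ (Fin d) → ℝ) : ℝ :=
  ⨆ q : (Fin d → ℕ) × EuclideanSpace ℝ (Fin d),
    |pderivMulti q.1 f q.2| * (1 + ‖q.2‖) ^ n / (h ^ (∑ i, q.1 i) * M (∑ i, q.1 i))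

/-- The norm `‖f‖_{k,n} = max_{|α| ≤ k} sup_x |f^{(α)}(x)| (1+|x|)^n`. -/
noncomputable def schwartzNormKN (d k n : ℕ) (f : EuclideanSpace ℝ (Fin d) → ℝ) : ℝ :=
  ⨆ q : {α : Fin d → ℕ // ∑ i, α i ≤ k} × EuclideanSpace ℝ (Fin d),
    |pderivMulti q.1.1 f q.2| * (1 + ‖q.2‖) ^ n

/-- The weight `e^{-ε (1/t)^{1/(σ-1)}}`, with value `0` at `t = 0`. -/
noncomputable def gevreyWeight (σ ε t : ℝ) : ℝ :=
  if t = 0 then 0 else Real.exp (-(ε * (1 / t) ^ (1 / (σ - 1))))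

section PartialDerivatives

variable {d : ℕ}

theorem contDiff_pderivI {f : EuclideanSpace ℝ (Fin d) → ℝ} (hf : ContDiff ℝ (⊤ : ℕ∞) f)
    (i : Fin d) : ContDiff ℝ (⊤ : ℕ∞) (pderivI i f) :=
  (contDiff_infty_iff_fderiv.mp hf).2.clm_apply contDiff_const

theorem contDiff_pderivList {f : EuclideanSpace ℝ (Fin d) → ℝ} (hf : ContDiff ℝ (⊤ : ℕ∞) f)
    (l : List (Fin d)) : ContDiff ℝ (⊤ : ℕ∞) (pderivList l f) := by
  induction l generalizing f with
  | nil => exact hf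
  | cons i l ih => exact ih (contDiff_pderivI hf i)

theorem HasCompactSupport.pderivList {f : EuclideanSpace ℝ (Fin d) → ℝ}
    (hf : HasCompactSupport f) (l : List (Fin d)) : HasCompactSupport (pderivList l f) := by
  induction l generalizing f with
  | nil => exact hf
  | cons i l ih => exact ih (hf.fderiv ℝ |>.comp_left
    (g := fun L : EuclideanSpace ℝ (Fin d) →L[ℝ] ℝ => L (EuclideanSpace.single i 1)) rfl)

theorem pderivList_zero_fun (l : List (Fin d)) :
    pderivList l (0 : EuclideanSpace ℝ (Fin d) → ℝ) = 0 := by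
  induction l with
  | nil => rfl
  | cons i l ih =>
    have h : pderivI i (0 : EuclideanSpace ℝ (Fin d) → ℝ) = 0 := by
      funext y; simp [pderivI]
    rw [pderivList, h, ih]

theorem pderivMulti_zero (f : EuclideanSpace ℝ (Fin d) → ℝ) :
    pderivMulti 0 f = f := by
  have hnil : ((List.finRange d).flatMap fun i => List.replicate ((0 : Fin d → ℕ) i) i) = [] :=
    List.flatMap_eq_nil_iff.2 fun _ _ => rfl
  rw [pderivMulti, hnil, pderivList]

theorem length_flatMap_finRange_replicate (α : Fin d → ℕ) :
    ((List.finRange d).flatMap fun i => List.replicate (α i) i).length = ∑ i, α i := by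
  simp [List.length_flatMap, Fin.sum_univ_def]

theorem pderivI_const_mul_comp_smul_sub {f : EuclideanSpace ℝ (Fin d) → ℝ}
    (hf : Differentiable ℝ f) (c a : ℝ) (x₀ : EuclideanSpace ℝ (Fin d)) (i : Fin d) :
    pderivI i (fun y => c * f (a • (y - x₀))) = fun y => c * a * pderivI i f (a • (y - x₀)) := by
  funext y
  have hA : HasFDerivAt (fun y : EuclideanSpace ℝ (Fin d) => a • (y - x₀))
      (a • ContinuousLinearMap.id ℝ _) y :=
    ((hasFDerivAt_id y).sub_const x₀).const_smul a
  have hcomp : HasFDerivAt (fun y => c * f (a • (y - x₀)))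
      (c • (fderiv ℝ f (a • (y - x₀))).comp (a • ContinuousLinearMap.id ℝ _)) y :=
    ((hf _).hasFDerivAt.comp y hA).const_mul c
  simp [pderivI, hcomp.fderiv, mul_assoc]

theorem pderivList_const_mul_comp_smul_sub (l : List (Fin d)) {f : EuclideanSpace ℝ (Fin d) → ℝ}
    (hf : ContDiff ℝ (⊤ : ℕ∞) f) (c a : ℝ) (x₀ : EuclideanSpace ℝ (Fin d)) :
    pderivList l (fun y => c * f (a • (y - x₀))) =
      fun y => c * a ^ l.length * pderivList l f (a • (y - x₀)) := by
  induction l generalizing f c with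
  | nil => simp [pderivList]
  | cons i l ih =>
    simp only [pderivList, pderivI_const_mul_comp_smul_sub (hf.differentiable (by simp)),
      ih (contDiff_pderivI hf i), List.length_cons, pow_succ]
    funext y
    ring

theorem pderivMulti_const_mul_comp_smul_sub (α : Fin d → ℕ) {f : EuclideanSpace ℝ (Fin d) → ℝ}
    (hf : ContDiff ℝ (⊤ : ℕ∞) f) (c a : ℝ) (x₀ : EuclideanSpace ℝ (Fin d)) :
    pderivMulti α (fun y => c * f (a • (y - x₀))) =
      fun y => c * a ^ (∑ i, α i) * pderivMulti α f (a • (y - x₀)) := by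
  rw [pderivMulti, pderivList_const_mul_comp_smul_sub _ hf, length_flatMap_finRange_replicate,
    pderivMulti]

theorem exists_bound_pderivMulti {f : EuclideanSpace ℝ (Fin d) → ℝ}
    (hf : ContDiff ℝ (⊤ : ℕ∞) f) (hfc : HasCompactSupport f) (k : ℕ) :
    ∃ M, 0 < M ∧ ∀ α : Fin d → ℕ, ∑ i, α i ≤ k → ∀ y, |pderivMulti α f y| ≤ M := by
  choose C hC using fun α : Fin d → ℕ =>
    (contDiff_pderivList hf _).continuous.bounded_above_of_compact_support (hfc.pderivList
      ((List.finRange d).flatMap fun i => List.replicate (α i) i))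
  let A := Fintype.piFinset fun _ : Fin d => Finset.range (k + 1)
  refine ⟨1 + ∑ α ∈ A, |C α|, by positivity, fun α hα y => ?_⟩
  have hαA : α ∈ A := Fintype.mem_piFinset.2 fun i => Finset.mem_range_succ_iff.2
    ((Finset.single_le_sum (fun j _ => Nat.zero_le (α j)) (Finset.mem_univ i)).trans hα)
  calc |pderivMulti α f y| ≤ |C α| := (hC α y).trans (le_abs_self _)
    _ ≤ ∑ α ∈ A, |C α| := Finset.single_le_sum (fun β _ => abs_nonneg (C β)) hαA
    _ ≤ 1 + ∑ α ∈ A, |C α| := le_add_of_nonneg_left zero_le_one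

end PartialDerivatives

section TestFunctions

variable {d k : ℕ}

def IsTestFunction (k : ℕ) (x : EuclideanSpace ℝ (Fin d)) (r : ℝ)
    (φ : EuclideanSpace ℝ (Fin d) → ℝ) : Prop :=
  ContDiff ℝ (⊤ : ℕ∞) φ ∧ tsupport φ ⊆ Metric.closedBall x r ∧
    ∀ α : Fin d → ℕ, ∑ i, α i ≤ k → ∀ y, |pderivMulti α φ y| ≤ 1

theorem isTestFunction_zero (x : EuclideanSpace ℝ (Fin d)) (r : ℝ) :
    IsTestFunction k x r 0 := by
  refine ⟨contDiff_const, by simp [tsupport], fun α _ y => ?_⟩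
  simp [pderivMulti, pderivList_zero_fun]

theorem IsTestFunction.hasCompactSupport {x : EuclideanSpace ℝ (Fin d)} {r : ℝ}
    {φ : EuclideanSpace ℝ (Fin d) → ℝ} (hφ : IsTestFunction k x r φ) : HasCompactSupport φ :=
  (isCompact_closedBall x r).of_isClosed_subset (isClosed_tsupport φ) hφ.2.1

theorem IsTestFunction.abs_le_one {x : EuclideanSpace ℝ (Fin d)} {r : ℝ}
    {φ : EuclideanSpace ℝ (Fin d) → ℝ} (hφ : IsTestFunction k x r φ)
    (y : EuclideanSpace ℝ (Fin d)) : |φ y| ≤ 1 := by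
  simpa [pderivMulti_zero] using hφ.2.2 0 (by simp) y

theorem isTestFunction_const_mul_comp_smul_sub {ψ : EuclideanSpace ℝ (Fin d) → ℝ} {M r : ℝ}
    (hψ : ContDiff ℝ (⊤ : ℕ∞) ψ) (hsupp : tsupport ψ ⊆ Metric.closedBall 0 1) (hM : 0 < M)
    (hbound : ∀ α : Fin d → ℕ, ∑ i, α i ≤ k → ∀ y, |pderivMulti α ψ y| ≤ M)
    (hr : 0 < r) (hr1 : r ≤ 1) (x : EuclideanSpace ℝ (Fin d)) :
    IsTestFunction k x r (fun y => r ^ k / M * ψ (r⁻¹ • (y - x))) := by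
  refine ⟨contDiff_const.mul (hψ.comp ((contDiff_id.sub contDiff_const).const_smul _)), ?_, ?_⟩
  · refine (tsupport_mul_subset_right.trans
      (tsupport_comp_subset_preimage ψ (by fun_prop))).trans fun y hy => ?_
    have : ‖r⁻¹ • (y - x)‖ ≤ 1 := by simpa using hsupp hy
    rw [norm_smul, norm_inv, Real.norm_of_nonneg hr.le, inv_mul_le_iff₀ hr, mul_one] at this
    rwa [mem_closedBall_iff_norm]
  · intro α hα y
    rw [pderivMulti_const_mul_comp_smul_sub α hψ, abs_mul, abs_of_nonneg (by positivity)]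
    calc r ^ k / M * r⁻¹ ^ (∑ i, α i) * |pderivMulti α ψ (r⁻¹ • (y - x))|
        ≤ r ^ k / M * r⁻¹ ^ (∑ i, α i) * M := by gcongr; exact hbound α hα _
      _ = r ^ (k - ∑ i, α i) := by
        rw [pow_sub₀ r hr.ne' hα, inv_pow]; field_simp
      _ ≤ 1 := pow_le_one₀ hr.le hr1

theorem exists_isTestFunction_integral_mul_ne_zero {g : EuclideanSpace ℝ (Fin d) → ℝ}
    (hg : Continuous g) (hg0 : g 0 ≠ 0) (k : ℕ) :
    ∃ φ, IsTestFunction k 0 1 φ ∧ ∫ y, g y * φ y ≠ 0 := by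
  obtain ⟨ε, hε, hball⟩ := Metric.isOpen_iff.1
    (isOpen_lt continuous_const (hg.const_mul (g 0)) : IsOpen {y | 0 < g 0 * g y}) 0
    (mul_self_pos.2 hg0)
  let b : ContDiffBump (0 : EuclideanSpace ℝ (Fin d)) :=
    ⟨min ε 1 / 2, min ε 1, by positivity, by linarith [lt_min hε one_pos]⟩
  obtain ⟨M, hM, hbound⟩ := exists_bound_pderivMulti b.contDiff b.hasCompactSupport k
  refine ⟨_, isTestFunction_const_mul_comp_smul_sub b.contDiff
    (b.tsupport_eq ▸ Metric.closedBall_subset_closedBall (min_le_right _ _)) hM hbound one_pos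
    le_rfl 0, ?_⟩
  have hpos : 0 < ∫ y, g 0 * g y * b y := by
    refine ((continuous_const.mul hg).mul b.continuous)
      |>.integral_pos_of_hasCompactSupport_nonneg_nonzero b.hasCompactSupport.mul_left
        (fun y => ?_) (x := 0) ?_
    · by_cases hy : y ∈ Metric.ball 0 (min ε 1)
      · exact mul_nonneg (hball (Metric.ball_subset_ball (min_le_left _ _) hy)).le b.nonneg
      · simp [Function.notMem_support.1 (b.support_eq ▸ hy : y ∉ Function.support b)]
    · simpa [b.one_of_mem_closedBall (Metric.mem_closedBall_self (by positivity))] using hg0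
  have hgb : ∫ y, g y * b y ≠ 0 := by
    simp_rw [mul_assoc, integral_const_mul] at hpos
    exact right_ne_zero_of_mul hpos.ne'
  simp_rw [one_pow, inv_one, one_smul, sub_zero, mul_left_comm (g _), integral_const_mul]
  exact mul_ne_zero (by positivity) hgb

end TestFunctions

theorem integral_mul_comp_inv_smul_sub {E : Type*} [NormedAddCommGroup E] [NormedSpace ℝ E]
    [MeasurableSpace E] [BorelSpace E] [FiniteDimensional ℝ E] (μ : Measure E)
    [μ.IsAddHaarMeasure] (f g : E → ℝ) (x : E) {r : ℝ} (hr : 0 < r) :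
    ∫ y, f y * g (r⁻¹ • (y - x)) ∂μ = r ^ Module.finrank ℝ E * ∫ z, f (x + r • z) * g z ∂μ := by
  have hF : ∀ y, f y * g (r⁻¹ • (y - x)) =
      (fun z => f (x + r • z) * g z) (r⁻¹ • (y - x)) := fun y => by
    simp [smul_smul, hr.ne']
  simp_rw [hF]
  rw [integral_sub_right_eq_self (fun y => (fun z => f (x + r • z) * g z) (r⁻¹ • y)) x,
    Measure.integral_comp_inv_smul_of_nonneg μ (fun z => f (x + r • z) * g z) hr.le, smul_eq_mul]

namespace MvPolynomial

variable {σ τ R : Type*} [CommSemiring R]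

theorem totalDegree_aeval_le {f : σ → MvPolynomial τ R} (hf : ∀ i, (f i).totalDegree ≤ 1)
    (P : MvPolynomial σ R) : (aeval f P).totalDegree ≤ P.totalDegree := by
  rw [aeval_def, eval₂_eq]
  refine (totalDegree_finsetSum _ _).trans (Finset.sup_le fun s hs => ?_)
  refine (totalDegree_mul _ _).trans ?_
  rw [algebraMap_eq, totalDegree_C, zero_add]
  refine (totalDegree_finsetProd _ _).trans ((Finset.sum_le_sum fun i _ => ?_).trans
    (le_totalDegree hs))
  exact (totalDegree_pow _ _).trans (mul_le_of_le_one_right (Nat.zero_le _) (hf i))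

end MvPolynomial

section Polynomials

open MvPolynomial

variable {d : ℕ}

theorem continuous_eval_euclideanSpace (P : MvPolynomial (Fin d) ℝ) :
    Continuous fun y : EuclideanSpace ℝ (Fin d) => eval (fun i => y i) P :=
  P.continuous_eval.comp (PiLp.continuous_ofLp 2 _)

theorem integrable_eval_mul (P : MvPolynomial (Fin d) ℝ) {φ : EuclideanSpace ℝ (Fin d) → ℝ}
    (hφ : Continuous φ) (hφc : HasCompactSupport φ) :
    Integrable fun y => eval (fun i => y i) P * φ y :=
  ((continuous_eval_euclideanSpace P).mul hφ).integrable_of_hasCompactSupport hφc.mul_left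

def affineComp (x : EuclideanSpace ℝ (Fin d)) (r : ℝ) :
    MvPolynomial (Fin d) ℝ →ₐ[ℝ] MvPolynomial (Fin d) ℝ :=
  aeval fun i => C (x i) + C r * X i

theorem eval_affineComp (x : EuclideanSpace ℝ (Fin d)) (r : ℝ) (P : MvPolynomial (Fin d) ℝ)
    (z : EuclideanSpace ℝ (Fin d)) :
    eval (fun i => z i) (affineComp x r P) = eval (fun i => (x + r • z) i) P := by
  rw [affineComp, aeval_eq_bind₁]
  change eval₂Hom _ _ (bind₁ _ P) = _
  rw [eval₂Hom_bind₁]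
  congr 2
  funext i
  simp

theorem totalDegree_affineComp_le (x : EuclideanSpace ℝ (Fin d)) (r : ℝ)
    (P : MvPolynomial (Fin d) ℝ) : (affineComp x r P).totalDegree ≤ P.totalDegree := by
  refine totalDegree_aeval_le (fun i => (totalDegree_add _ _).trans (max_le ?_ ?_)) P
  · simp
  · exact (totalDegree_mul _ _).trans (by simp [totalDegree_X])

end Polynomials

theorem exists_norm_le_mul_of_iInf_ker_le_ker {ι 𝕜 V : Type*} [NormedField 𝕜] [AddCommGroup V]
    [Module 𝕜 V] [FiniteDimensional 𝕜 V] {L : ι → V →ₗ[𝕜] 𝕜} {K : V →ₗ[𝕜] 𝕜}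
    (h : ⨅ i, LinearMap.ker (L i) ≤ LinearMap.ker K) :
    ∃ C : ℝ, 0 < C ∧ ∀ (v : V) (B : ℝ), 0 ≤ B → (∀ i, ‖L i v‖ ≤ B) → ‖K v‖ ≤ C * B := by
  obtain ⟨c, rfl⟩ :=
    Finsupp.mem_span_range_iff_exists_finsupp.1 (FiniteDimensional.mem_span_of_iInf_ker_le_ker h)
  refine ⟨1 + c.sum fun _ a => ‖a‖,
    add_pos_of_pos_of_nonneg one_pos (Finset.sum_nonneg fun _ _ => norm_nonneg _),
    fun v B hB hv => ?_⟩
  calc ‖(c.sum fun i a => a • L i) v‖ ≤ c.sum fun i a => ‖a‖ * B := by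
        simp only [Finsupp.sum, LinearMap.sum_apply, LinearMap.smul_apply, smul_eq_mul]
        exact (norm_sum_le _ _).trans (Finset.sum_le_sum fun i _ => by
          rw [norm_mul]; exact mul_le_mul_of_nonneg_left (hv i) (norm_nonneg _))
    _ ≤ (1 + c.sum fun _ a => ‖a‖) * B := by
        rw [add_mul, Finsupp.sum, Finsupp.sum, Finset.sum_mul]
        linarith

section TestIntegrals

open MvPolynomial

variable {d k : ℕ}

def testIntegrals (k : ℕ) (P : MvPolynomial (Fin d) ℝ) (x : EuclideanSpace ℝ (Fin d)) (r : ℝ) :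
    Set ℝ :=
  (fun φ => |∫ y, eval (fun i => y i) P * φ y|) '' {φ | IsTestFunction k x r φ}

theorem zero_mem_testIntegrals (P : MvPolynomial (Fin d) ℝ) (x : EuclideanSpace ℝ (Fin d))
    (r : ℝ) : 0 ∈ testIntegrals k P x r :=
  ⟨0, isTestFunction_zero x r, by simp⟩

theorem bddAbove_testIntegrals (P : MvPolynomial (Fin d) ℝ) (x : EuclideanSpace ℝ (Fin d))
    (r : ℝ) : BddAbove (testIntegrals k P x r) := by
  obtain ⟨B, hB⟩ := (isCompact_closedBall x r).exists_bound_of_continuousOn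
    (continuous_eval_euclideanSpace P).continuousOn
  refine ⟨B * volume.real (Metric.closedBall x r), ?_⟩
  rintro _ ⟨φ, hφ, rfl⟩
  dsimp only
  have hzero : ∀ y ∉ Metric.closedBall x r, eval (fun i => y i) P * φ y = 0 := fun y hy => by
    rw [image_eq_zero_of_notMem_tsupport fun h => hy (hφ.2.1 h), mul_zero]
  rw [← setIntegral_eq_integral_of_forall_compl_eq_zero hzero, ← Real.norm_eq_abs]
  refine norm_setIntegral_le_of_norm_le_const measure_closedBall_lt_top fun y hy => ?_
  rw [norm_mul, Real.norm_eq_abs]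
  simpa using
    mul_le_mul (hB y hy) (hφ.abs_le_one y) (abs_nonneg _) ((norm_nonneg _).trans (hB y hy))

end TestIntegrals

section Comparison

open MvPolynomial

variable {d k : ℕ}

theorem mul_abs_integral_affineComp_mem_testIntegrals {P : MvPolynomial (Fin d) ℝ}
    {x : EuclideanSpace ℝ (Fin d)} {r : ℝ} (hr : 0 < r) (hr1 : r ≤ 1)
    {ψ : EuclideanSpace ℝ (Fin d) → ℝ} (hψ : IsTestFunction k 0 1 ψ) :
    r ^ (k + d) * |∫ z, eval (fun i => z i) (affineComp x r P) * ψ z| ∈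
      testIntegrals k P x r := by
  refine ⟨_, isTestFunction_const_mul_comp_smul_sub hψ.1 hψ.2.1 one_pos hψ.2.2 hr hr1 x, ?_⟩
  dsimp only
  simp_rw [div_one, mul_left_comm _ (r ^ k), integral_const_mul,
    integral_mul_comp_inv_smul_sub volume _ _ x hr, finrank_euclideanSpace_fin, eval_affineComp]
  rw [abs_mul, abs_mul, abs_of_pos (by positivity), abs_of_pos (by positivity), pow_add, mul_assoc]

theorem exists_abs_eval_zero_le (d k m : ℕ) :
    ∃ C, 0 < C ∧ ∀ Q : MvPolynomial (Fin d) ℝ, Q.totalDegree ≤ m → ∀ B, 0 ≤ B →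
      (∀ φ, IsTestFunction k 0 1 φ → |∫ y, eval (fun i => y i) Q * φ y| ≤ B) →
      |eval 0 Q| ≤ C * B := by
  let V := restrictTotalDegree (Fin d) ℝ m
  let L : {φ // IsTestFunction k 0 1 φ} → V →ₗ[ℝ] ℝ := fun φ =>
    { toFun := fun Q => ∫ y, eval (fun i => y i) (Q : MvPolynomial (Fin d) ℝ) * φ.1 y
      map_add' := fun Q R => by
        simp only [Submodule.coe_add, map_add, add_mul]
        exact integral_add
          (integrable_eval_mul _ φ.2.1.continuous φ.2.hasCompactSupport)
          (integrable_eval_mul _ φ.2.1.continuous φ.2.hasCompactSupport)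
      map_smul' := fun a Q => by
        simp [mul_assoc, integral_const_mul] }
  let K : V →ₗ[ℝ] ℝ := (aeval (0 : Fin d → ℝ)).toLinearMap ∘ₗ V.subtype
  have hker : ⨅ φ, LinearMap.ker (L φ) ≤ LinearMap.ker K := fun Q hQ => by
    by_contra hQ0
    obtain ⟨φ, hφ, hne⟩ := exists_isTestFunction_integral_mul_ne_zero
      (continuous_eval_euclideanSpace (Q : MvPolynomial (Fin d) ℝ)) (by simpa [K] using hQ0) k
    exact hne ((Submodule.mem_iInf _).1 hQ ⟨φ, hφ⟩)
  obtain ⟨C, hC, hK⟩ := exists_norm_le_mul_of_iInf_ker_le_ker hker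
  refine ⟨C, hC, fun Q hQ B hB hQB => ?_⟩
  simpa [K] using hK ⟨Q, (mem_restrictTotalDegree _ _ _).2 hQ⟩ B hB fun φ => hQB φ.1 φ.2

end Comparison

/-- A quantitative estimate for polynomials of bounded degree: `|P(x)|`
is controlled, up to a factor `C / r^{k+d}`, by the supremum of `|∫ P φ|` over test
functions `φ` supported in `B̄(x,r)` with `‖φ‖_{k,0} ≤ 1`. -/
theorem polynomial_bound_by_testFunction_integrals
    (d k m : ℕ) :
    ∃ C : ℝ, 0 < C ∧ ∀ P : MvPolynomial (Fin d) ℝ, P.totalDegree ≤ m →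
      ∀ (x : EuclideanSpace ℝ (Fin d)) (r : ℝ), 0 < r → r ≤ 1 →
      |MvPolynomial.eval (fun i => x i) P| ≤ (C / r ^ (k + d)) *
        sSup {s : ℝ | ∃ φ : EuclideanSpace ℝ (Fin d) → ℝ, ContDiff ℝ (⊤ : ℕ∞) φ ∧
          tsupport φ ⊆ Metric.closedBall x r ∧
          (∀ α : Fin d → ℕ, (∑ i, α i) ≤ k → ∀ y, |pderivMulti α φ y| ≤ 1) ∧
          s = |∫ y, MvPolynomial.eval (fun i => y i) P * φ y|} := by
  obtain ⟨C, hC, hcomp⟩ := exists_abs_eval_zero_le d k m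
  refine ⟨C, hC, fun P hP x r hr hr1 => ?_⟩
  suffices |MvPolynomial.eval 0 (affineComp x r P)| ≤
      C * (sSup (testIntegrals k P x r) / r ^ (k + d)) by
    convert this using 1
    · simpa using congrArg abs (eval_affineComp x r P 0).symm
    · rw [mul_div_assoc', div_mul_eq_mul_div]
      congr 3
      ext s
      simp [testIntegrals, IsTestFunction, and_assoc, eq_comm]
  have hbdd := bddAbove_testIntegrals (k := k) P x r
  refine hcomp _ ((totalDegree_affineComp_le x r P).trans hP) _
    (div_nonneg (le_csSup hbdd (zero_mem_testIntegrals P x r)) (by positivity)) fun ψ hψ => ?_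
  rw [le_div_iff₀ (by positivity), mul_comm]
  exact le_csSup hbdd (mul_abs_integral_affineComp_mem_testIntegrals hr hr1 hψ)
end
end

section
/- Let M = (M_p)_{p∈ℕ} be a weight sequence satisfying (M.2). There exists C₀ > 0 such that for every a > 0 there exists C₁ > 0 with ν_M(t) ≤ C₁ t^a ν_M(C₀ t) for all t ≥ 0. -/
open MeasureTheory

noncomputable section

section NuM

variable {M : ℕ → ℝ} {t : ℝ}

lemma nuM_term_nonneg (hpos : ∀ p, 0 < M p) (ht : 0 ≤ t) (p : ℕ) :
    0 ≤ t ^ p * M p / (p.factorial : ℝ) :=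
  div_nonneg (mul_nonneg (pow_nonneg ht p) (hpos p).le) (Nat.cast_nonneg _)

lemma nuM_nonneg (hpos : ∀ p, 0 < M p) (ht : 0 ≤ t) : 0 ≤ nuM M t :=
  le_ciInf (nuM_term_nonneg hpos ht)

lemma nuM_le (hpos : ∀ p, 0 < M p) (ht : 0 ≤ t) (p : ℕ) :
    nuM M t ≤ t ^ p * M p / (p.factorial : ℝ) :=
  ciInf_le ⟨0, by rintro _ ⟨q, rfl⟩; exact nuM_term_nonneg hpos ht q⟩ p

/-- Shifting the index of the infimum by `k` and splitting `M (k + p)` with (M.2). -/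
lemma nuM_le_mul_pow_mul_nuM (hpos : ∀ p, 0 < M p) {C : ℝ} (hC : 0 ≤ C)
    (hM2 : ∀ p q : ℕ, M (p + q) ≤ C ^ (p + q) * M p * M q) (k : ℕ) (ht : 0 ≤ t) :
    nuM M t ≤ C ^ k * M k * t ^ k * nuM M (C * t) := by
  have hfac : 0 ≤ C ^ k * M k * t ^ k :=
    mul_nonneg (mul_nonneg (pow_nonneg hC k) (hpos k).le) (pow_nonneg ht k)
  refine (le_ciInf fun p => ?_).trans_eq (Real.mul_iInf_of_nonneg hfac _).symm
  calc nuM M t ≤ t ^ (k + p) * M (k + p) / ((k + p).factorial : ℝ) := nuM_le hpos ht _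
    _ ≤ t ^ (k + p) * (C ^ (k + p) * M k * M p) / (p.factorial : ℝ) := by
        gcongr
        · exact mul_nonneg (pow_nonneg ht _)
            (mul_nonneg (mul_nonneg (pow_nonneg hC _) (hpos k).le) (hpos p).le)
        · exact hM2 k p
        · exact Nat.le_add_left p k
    _ = C ^ k * M k * t ^ k * ((C * t) ^ p * M p / (p.factorial : ℝ)) := by
        rw [mul_pow, pow_add, pow_add]
        ring

end NuM

/-- If the weight sequence `M` satisfies `(M.2)`, then there is `C₀ > 0`
such that for every `a > 0` there is `C₁ > 0` with `ν_M(t) ≤ C₁ t^a ν_M(C₀ t)` for all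
`t ≥ 0`. -/
theorem nuM_le_rpow_mul_nuM_of_condM2
    (M : ℕ → ℝ) (hM : IsWeightSeq M) (hM2 : CondM2 M) :
    ∃ C₀ : ℝ, 0 < C₀ ∧ ∀ a : ℝ, 0 < a → ∃ C₁ : ℝ, 0 < C₁ ∧ ∀ t : ℝ, 0 ≤ t →
      nuM M t ≤ C₁ * t ^ a * nuM M (C₀ * t) := by
  obtain ⟨hpos, -, -, -, -⟩ := hM
  obtain ⟨C, hC, hM2⟩ := hM2
  refine ⟨C, hC, fun a ha => ?_⟩
  set k := ⌈a⌉₊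
  refine ⟨max (M 0) (C ^ k * M k), (hpos 0).trans_le (le_max_left _ _), fun t ht => ?_⟩
  have hnu := nuM_nonneg hpos (mul_nonneg hC.le ht)
  -- Small `t` are handled by the shift `k = ⌈a⌉`, large `t` by the trivial shift `k = 0`.
  rcases le_or_gt t 1 with ht1 | ht1
  · have hpow : t ^ k ≤ t ^ a := by
      rw [← Real.rpow_natCast]
      exact Real.rpow_le_rpow_of_exponent_ge' ht ht1 ha.le (Nat.le_ceil a)
    calc nuM M t ≤ C ^ k * M k * t ^ k * nuM M (C * t) :=
          nuM_le_mul_pow_mul_nuM hpos hC.le hM2 k ht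
      _ ≤ max (M 0) (C ^ k * M k) * t ^ a * nuM M (C * t) := by
          gcongr
          · exact (hpos 0).le.trans (le_max_left _ _)
          · exact le_max_right _ _
  · calc nuM M t ≤ M 0 * 1 * nuM M (C * t) := by
          simpa using nuM_le_mul_pow_mul_nuM hpos hC.le hM2 0 ht
      _ ≤ max (M 0) (C ^ k * M k) * t ^ a * nuM M (C * t) := by
          gcongr
          · exact (hpos 0).le.trans (le_max_left _ _)
          · exact le_max_left _ _
          · exact Real.one_le_rpow ht1.le ha.le

end
end
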